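/- arXiv:2003.03618 — 2 statements merged into one kernel-verified Lean document; each statement's English description precedes it below -/
import Mathlib

section
/- For a smooth function v : ℝ → ℝ with bounded second derivative and a nonnegative kernel ρ_δ supported in (0,δ) with ∫₀^δ ρ_δ(s) ds = 1, the nonlocal derivative G_δ v(t) = ∫₀^δ (v(t) - v(t-s))/s · ρ_δ(s) ds satisfies |G_δ v(t) - v'(t)| ≤ (δ/2) · sup |v''|. -/
open MeasureTheory Set

/-!
By Taylor's theorem with Lagrange remainder, the backward difference quotient
`(v t - v (t - s)) / s` differs from `v' t` by `v'' ξ * s / 2`, hence by at most `M s / 2 ≤ M δ / 2`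
for `s ∈ (0, δ)`. Since `ρ` is a probability density on `(0, δ)`, averaging the quotient against `ρ`
keeps it within the same distance of `v' t`.
-/

theorem exists_taylor_two_lagrange {f : ℝ → ℝ} (hf : ContDiff ℝ 2 f) {x₀ x : ℝ} (hx : x₀ ≠ x) :
    ∃ ξ ∈ uIoo x₀ x, f x - f x₀ - (x - x₀) * deriv f x₀ = deriv (deriv f) ξ * (x - x₀) ^ 2 / 2 := by
  obtain ⟨ξ, hξ, h⟩ := taylor_mean_remainder_lagrange_iteratedDeriv (n := 1) hx hf.contDiffOn
  have hd : derivWithin f (uIcc x₀ x) x₀ = deriv f x₀ :=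
    ((hf.differentiable (by norm_num)) x₀).derivWithin (uniqueDiffOn_uIcc hx x₀ left_mem_uIcc)
  simp only [taylorWithinEval_succ, taylor_within_zero_eval, iteratedDeriv_succ] at h
  norm_num [hd] at h
  exact ⟨ξ, hξ, by rw [← h]; ring⟩

theorem abs_sub_sub_mul_deriv_le {f : ℝ → ℝ} (hf : ContDiff ℝ 2 f) {M : ℝ}
    (hM : ∀ x, |deriv (deriv f) x| ≤ M) (x₀ x : ℝ) :
    |f x - f x₀ - (x - x₀) * deriv f x₀| ≤ M / 2 * (x - x₀) ^ 2 := by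
  rcases eq_or_ne x₀ x with rfl | hx
  · simp
  obtain ⟨ξ, -, h⟩ := exists_taylor_two_lagrange hf hx
  rw [h, abs_div, abs_mul, abs_sq, abs_two]
  have := mul_le_mul_of_nonneg_right (hM ξ) (sq_nonneg (x - x₀))
  linarith

theorem abs_backward_difference_quotient_sub_deriv_le {f : ℝ → ℝ} (hf : ContDiff ℝ 2 f) {M : ℝ}
    (hM : ∀ x, |deriv (deriv f) x| ≤ M) (t : ℝ) {s : ℝ} (hs : 0 < s) :
    |(f t - f (t - s)) / s - deriv f t| ≤ M / 2 * s := by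
  have h := abs_sub_sub_mul_deriv_le hf hM t (t - s)
  have hq : (f t - f (t - s)) / s - deriv f t = -(f (t - s) - f t - (t - s - t) * deriv f t) / s := by
    field_simp
    ring
  rw [hq, abs_div, abs_neg, abs_of_pos hs, div_le_iff₀ hs]
  nlinarith

theorem abs_integral_mul_sub_le_of_ae_abs_sub_le {α : Type*} [MeasurableSpace α] {μ : Measure α}
    {g ρ : α → ℝ} {c C : ℝ} (hg : AEStronglyMeasurable g μ) (hρ : Integrable ρ μ)
    (hρ_nonneg : 0 ≤ᵐ[μ] ρ) (hρ_mass : ∫ x, ρ x ∂μ = 1) (hgc : ∀ᵐ x ∂μ, |g x - c| ≤ C) :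
    |∫ x, g x * ρ x ∂μ - c| ≤ C := by
  have hdev_le : ∀ᵐ x ∂μ, ‖(g x - c) * ρ x‖ ≤ C * ρ x := by
    filter_upwards [hgc, hρ_nonneg] with x hx hx0
    rw [Real.norm_eq_abs, abs_mul, abs_of_nonneg hx0]
    exact mul_le_mul_of_nonneg_right hx hx0
  have hdev : Integrable (fun x => (g x - c) * ρ x) μ :=
    (hρ.const_mul C).mono' ((hg.sub aestronglyMeasurable_const).mul hρ.1) hdev_le
  have hsplit : ∫ x, g x * ρ x ∂μ - c = ∫ x, (g x - c) * ρ x ∂μ := by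
    have hgρ : Integrable (fun x => g x * ρ x) μ := by
      refine (hdev.add (hρ.const_mul c)).congr (ae_of_all _ fun x => ?_)
      simp only [Pi.add_apply]
      ring
    simp only [sub_mul, integral_sub hgρ (hρ.const_mul c), integral_const_mul, hρ_mass, mul_one]
  calc |∫ x, g x * ρ x ∂μ - c| = ‖∫ x, (g x - c) * ρ x ∂μ‖ := by rw [hsplit, Real.norm_eq_abs]
    _ ≤ ∫ x, C * ρ x ∂μ := norm_integral_le_of_norm_le (hρ.const_mul C) hdev_le
    _ = C := by rw [integral_const_mul, hρ_mass, mul_one]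

theorem nonlocal_derivative_approx_general (δ : ℝ) (ρ v : ℝ → ℝ) (M t : ℝ)
    (hρ_nonneg : ∀ s, 0 ≤ ρ s)
    (hρ_int : IntegrableOn ρ (Set.Ioo 0 δ))
    (hρ_mass : ∫ s in Set.Ioo 0 δ, ρ s = 1)
    (hv : ContDiff ℝ 2 v)
    (hM : ∀ x, |deriv (deriv v) x| ≤ M) :
    |(∫ s in Set.Ioo 0 δ, (v t - v (t - s)) / s * ρ s) - deriv v t| ≤ δ / 2 * M := by
  have hM0 : 0 ≤ M := (abs_nonneg _).trans (hM 0)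
  have hquot_meas : Measurable fun s => (v t - v (t - s)) / s := by
    have := hv.continuous.measurable
    fun_prop
  refine abs_integral_mul_sub_le_of_ae_abs_sub_le hquot_meas.aestronglyMeasurable hρ_int
    (ae_of_all _ hρ_nonneg) hρ_mass ?_
  filter_upwards [ae_restrict_mem measurableSet_Ioo] with s ⟨hs0, hsδ⟩
  calc |(v t - v (t - s)) / s - deriv v t| ≤ M / 2 * s :=
        abs_backward_difference_quotient_sub_deriv_le hv hM t hs0
    _ ≤ δ / 2 * M := by nlinarith

theorem nonlocal_derivative_approx (δ : ℝ) (hδ : 0 < δ) (ρ v : ℝ → ℝ) (M t : ℝ)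
    (hρ_nonneg : ∀ s, 0 ≤ ρ s) (hρ_meas : Measurable ρ)
    (hρ_supp : ∀ s, s ∉ Set.Ioo 0 δ → ρ s = 0)
    (hρ_int : IntegrableOn ρ (Set.Ioo 0 δ))
    (hρ_mass : ∫ s in Set.Ioo 0 δ, ρ s = 1)
    (hv : ContDiff ℝ 2 v)
    (hM : ∀ x, |deriv (deriv v) x| ≤ M) :
    |(∫ s in Set.Ioo 0 δ, (v t - v (t - s)) / s * ρ s) - deriv v t| ≤ δ / 2 * M :=
  nonlocal_derivative_approx_general δ ρ v M t hρ_nonneg hρ_int hρ_mass hv hM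
end

section
/- Large-z asymptotics of the symbol for the fractional kernel: with ρ_δ(s) = (1-α)δ^(α-1) s^(-α), α ∈ (0,1), the function K(z) = ∫₀^δ ((1-e^{-zs})/s) ρ_δ(s) ds satisfies lim_{z→∞} z^{-α} K(z) = (1-α) δ^{α-1} · ∫₀^∞ (1-e^{-r}) r^{-α-1} dr = (1-α) δ^{α-1} Γ(1-α)/α. -/
open MeasureTheory Set Filter Topology

lemma aux_nonneg {r : ℝ} (hr : 0 ≤ r) : 0 ≤ 1 - Real.exp (-r) := by
  have : Real.exp (-r) ≤ 1 := Real.exp_le_one_iff.mpr (by linarith)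
  linarith

lemma aux_le {r : ℝ} : 1 - Real.exp (-r) ≤ r := by
  have := Real.add_one_le_exp (-r)
  linarith

lemma aux_contOn (α : ℝ) :
    ContinuousOn (fun r : ℝ => (1 - Real.exp (-r)) * r ^ (-α - 1)) (Set.Ioi 0) := by
  intro r hr
  have h1 : ContinuousAt (fun r : ℝ => (1 - Real.exp (-r)) * r ^ (-α - 1)) r := by
    exact (continuousAt_const.sub ((Real.continuous_exp.continuousAt).comp
      (continuous_neg.continuousAt))).mul
      (Real.continuousAt_rpow_const r _ (Or.inl (ne_of_gt hr)))
  exact h1.continuousWithinAt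

lemma rpow_split {r : ℝ} (hr : 0 < r) {α : ℝ} : r * r ^ (-α - 1) = r ^ (-α) := by
  nth_rewrite 1 [← Real.rpow_one r]
  rw [← Real.rpow_add hr]
  congr 1; ring

lemma g_integrable {α : ℝ} (hα : α ∈ Set.Ioo (0:ℝ) 1) :
    IntegrableOn (fun r : ℝ => (1 - Real.exp (-r)) * r ^ (-α - 1)) (Set.Ioi 0) := by
  obtain ⟨hα0, hα1⟩ := hα
  have h1 : IntegrableOn (fun r : ℝ => (1 - Real.exp (-r)) * r ^ (-α - 1)) (Set.Ioc 0 1) := by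
    have hint : IntegrableOn (fun r : ℝ => r ^ (-α)) (Set.Ioc 0 1) := by
      have := intervalIntegral.intervalIntegrable_rpow' (a := (0:ℝ)) (b := 1)
        (r := -α) (by linarith)
      rwa [intervalIntegrable_iff_integrableOn_Ioc_of_le zero_le_one] at this
    refine Integrable.mono hint
      (((aux_contOn α).mono Set.Ioc_subset_Ioi_self).aestronglyMeasurable measurableSet_Ioc) ?_
    filter_upwards [ae_restrict_mem measurableSet_Ioc] with r hr
    obtain ⟨hr0, hr1⟩ := hr
    have hb : (1 - Real.exp (-r)) * r ^ (-α - 1) ≤ r ^ (-α) := by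
      calc (1 - Real.exp (-r)) * r ^ (-α - 1) ≤ r * r ^ (-α - 1) :=
            mul_le_mul_of_nonneg_right aux_le (Real.rpow_nonneg hr0.le _)
        _ = r ^ (-α) := rpow_split hr0
    have hnn : 0 ≤ (1 - Real.exp (-r)) * r ^ (-α - 1) :=
      mul_nonneg (aux_nonneg hr0.le) (Real.rpow_nonneg hr0.le _)
    rw [Real.norm_eq_abs, Real.norm_eq_abs, abs_of_nonneg hnn,
      abs_of_nonneg (Real.rpow_nonneg hr0.le _)]
    exact hb
  have h2 : IntegrableOn (fun r : ℝ => (1 - Real.exp (-r)) * r ^ (-α - 1)) (Set.Ioi 1) := by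
    have hint : IntegrableOn (fun r : ℝ => r ^ (-α - 1)) (Set.Ioi 1) :=
      integrableOn_Ioi_rpow_of_lt (by linarith) one_pos
    refine Integrable.mono hint
      (((aux_contOn α).mono (Set.Ioi_subset_Ioi zero_le_one)).aestronglyMeasurable
        measurableSet_Ioi) ?_
    filter_upwards [ae_restrict_mem measurableSet_Ioi] with r hr
    have hr0 : (0:ℝ) < r := lt_trans one_pos hr
    have h1' : 1 - Real.exp (-r) ≤ 1 := by
      have := Real.exp_pos (-r); linarith
    have hb : (1 - Real.exp (-r)) * r ^ (-α - 1) ≤ r ^ (-α - 1) := by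
      nlinarith [Real.rpow_nonneg hr0.le (-α - 1), aux_nonneg hr0.le]
    have hnn : 0 ≤ (1 - Real.exp (-r)) * r ^ (-α - 1) :=
      mul_nonneg (aux_nonneg hr0.le) (Real.rpow_nonneg hr0.le _)
    rw [Real.norm_eq_abs, Real.norm_eq_abs, abs_of_nonneg hnn,
      abs_of_nonneg (Real.rpow_nonneg hr0.le _)]
    exact hb
  have := h1.union h2
  rwa [Set.Ioc_union_Ioi_eq_Ioi zero_le_one] at this

lemma gamma_identity {α : ℝ} (hα : α ∈ Set.Ioo (0:ℝ) 1) :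
    ∫ r in Set.Ioi (0:ℝ), (1 - Real.exp (-r)) * r ^ (-α - 1) = Real.Gamma (1 - α) / α := by
  obtain ⟨hα0, hα1⟩ := hα
  set g : ℝ → ℝ := fun r => (1 - Real.exp (-r)) * r ^ (-α - 1) with hg
  set h : ℝ → ℝ := fun r => Real.exp (-r) * r ^ (-α) / α with hh
  have hGam : IntegrableOn (fun r : ℝ => Real.exp (-r) * r ^ (-α)) (Set.Ioi 0) := by
    have := Real.GammaIntegral_convergent (s := 1 - α) (by linarith)
    simpa only [show (1:ℝ) - α - 1 = -α by ring] using this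
  have hhint : IntegrableOn h (Set.Ioi 0) := by
    simpa [h, div_eq_mul_inv, mul_comm, IntegrableOn] using hGam.mul_const (α⁻¹)
  have hgint : IntegrableOn g (Set.Ioi 0) := g_integrable ⟨hα0, hα1⟩
  set F : ℝ → ℝ := fun r => -((1 - Real.exp (-r)) * r ^ (-α)) / α with hF
  have hderiv : ∀ r ∈ Set.Ioi (0:ℝ), HasDerivAt F (g r - h r) r := by
    intro r hr
    have hr0 : (0:ℝ) < r := hr
    have d1 : HasDerivAt (fun r : ℝ => 1 - Real.exp (-r)) (Real.exp (-r)) r := by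
      simpa using ((Real.hasDerivAt_exp (-r)).comp r (hasDerivAt_neg r)).const_sub 1
    have d2 : HasDerivAt (fun r : ℝ => r ^ (-α)) (-α * r ^ (-α - 1)) r :=
      Real.hasDerivAt_rpow_const (Or.inl hr0.ne')
    have := ((d1.mul d2).neg).div_const α
    convert this using 1
    have hsplit : r * r ^ (-α - 1) = r ^ (-α) := rpow_split hr0
    show (1 - Real.exp (-r)) * r ^ (-α - 1) - Real.exp (-r) * r ^ (-α) / α = _
    field_simp
    nlinarith [rpow_split hr0 (α := α), Real.exp_pos (-r)]
    all_goals rfl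
  have hlim : Tendsto F atTop (𝓝 0) := by
    have h1 : Tendsto (fun r : ℝ => 1 - Real.exp (-r)) atTop (𝓝 1) := by
      have : Tendsto (fun r : ℝ => Real.exp (-r)) atTop (𝓝 0) :=
        Real.tendsto_exp_neg_atTop_nhds_zero
      simpa using this.const_sub 1
    have h2 : Tendsto (fun r : ℝ => r ^ (-α)) atTop (𝓝 0) :=
      tendsto_rpow_neg_atTop hα0
    have := ((h1.mul h2).neg).div_const α
    simpa using this
  have hcont : ContinuousWithinAt F (Set.Ici 0) 0 := by
    have key : Tendsto F (nhdsWithin 0 (Set.Ici 0)) (𝓝 0) := by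
      have hb : Tendsto (fun r : ℝ => r ^ (1 - α) / α) (nhdsWithin 0 (Set.Ici 0)) (𝓝 0) := by
        have hc : ContinuousWithinAt (fun r : ℝ => r ^ (1 - α)) (Set.Ici 0) 0 :=
          (Real.continuousAt_rpow_const 0 (1 - α) (Or.inr (by linarith))).continuousWithinAt
        have := hc.tendsto.div_const α
        simpa [Real.zero_rpow (show (1:ℝ) - α ≠ 0 by linarith)] using this
      refine squeeze_zero_norm' ?_ hb
      filter_upwards [self_mem_nhdsWithin] with r hr
      have hr0 : (0:ℝ) ≤ r := hr
      have hkey : (1 - Real.exp (-r)) * r ^ (-α) ≤ r ^ (1 - α) := by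
        rcases eq_or_lt_of_le hr0 with h0 | hpos
        · simp [← h0, Real.zero_rpow (show (1:ℝ) - α ≠ 0 by linarith),
            Real.zero_rpow (show -α ≠ 0 by linarith)]
        · calc (1 - Real.exp (-r)) * r ^ (-α) ≤ r * r ^ (-α) :=
              mul_le_mul_of_nonneg_right aux_le (Real.rpow_nonneg hr0 _)
            _ = r ^ (1 - α) := by
              rw [show (1:ℝ) - α = 1 + (-α) by ring, Real.rpow_add hpos, Real.rpow_one]
      have hnn : 0 ≤ (1 - Real.exp (-r)) * r ^ (-α) :=
        mul_nonneg (aux_nonneg hr0) (Real.rpow_nonneg hr0 _)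
      simp only [hF, Real.norm_eq_abs]
      rw [neg_div, abs_neg, abs_div, abs_of_nonneg hnn, abs_of_pos hα0]
      gcongr
    have hF0 : F 0 = 0 := by
      simp [hF]
    rw [ContinuousWithinAt, hF0]
    exact key
  have hFTC : ∫ r in Set.Ioi (0:ℝ), (g r - h r) = 0 - F 0 :=
    integral_Ioi_of_hasDerivAt_of_tendsto hcont hderiv (hgint.sub hhint) hlim
  have hF0 : F 0 = 0 := by simp [hF]
  rw [integral_sub hgint hhint, hF0, sub_zero] at hFTC
  have hhval : ∫ r in Set.Ioi (0:ℝ), h r = Real.Gamma (1 - α) / α := by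
    rw [Real.Gamma_eq_integral (show (0:ℝ) < 1 - α by linarith)]
    simp only [hh, show (1:ℝ) - α - 1 = -α by ring]
    rw [integral_div]
  linarith [hFTC, hhval]

theorem symbol_large_z_asymptotics_fractional (α δ : ℝ) (hα : α ∈ Set.Ioo (0:ℝ) 1)
    (hδ : 0 < δ) :
    (∫ r in Set.Ioi (0:ℝ), (1 - Real.exp (-r)) * r ^ (-α - 1) = Real.Gamma (1 - α) / α) ∧
      Tendsto
        (fun z : ℝ => z ^ (-α) *
          ∫ s in Set.Ioo 0 δ,
            (1 - Real.exp (-z * s)) / s * ((1 - α) * δ ^ (α - 1) * s ^ (-α)))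
        atTop (nhds ((1 - α) * δ ^ (α - 1) * Real.Gamma (1 - α) / α)) := by
  obtain ⟨hα0, hα1⟩ := hα
  set C : ℝ := (1 - α) * δ ^ (α - 1) with hC
  set g : ℝ → ℝ := fun r => (1 - Real.exp (-r)) * r ^ (-α - 1) with hg
  have hgint : IntegrableOn g (Set.Ioi 0) := g_integrable ⟨hα0, hα1⟩
  refine ⟨gamma_identity ⟨hα0, hα1⟩, ?_⟩
  have htend : Tendsto (fun z : ℝ => z * δ) atTop atTop :=
    tendsto_id.atTop_mul_const hδ
  have hI : Tendsto (fun z : ℝ => ∫ r in (0:ℝ)..(z * δ), g r) atTop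
      (𝓝 (∫ r in Set.Ioi (0:ℝ), g r)) :=
    intervalIntegral_tendsto_integral_Ioi 0 hgint htend
  have hgoal : Tendsto (fun z : ℝ => C * ∫ r in (0:ℝ)..(z * δ), g r) atTop
      (𝓝 (C * Real.Gamma (1 - α) / α)) := by
    have := hI.const_mul C
    rw [gamma_identity ⟨hα0, hα1⟩] at this
    simpa [mul_div_assoc] using this
  refine hgoal.congr' ?_
  filter_upwards [eventually_gt_atTop (0:ℝ)] with z hz
  symm
  have step1 : ∫ s in Set.Ioo (0:ℝ) δ, (1 - Real.exp (-z * s)) / s * (C * s ^ (-α))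
      = ∫ s in Set.Ioo (0:ℝ) δ, (C * z ^ (α + 1)) * g (z * s) := by
    refine setIntegral_congr_fun measurableSet_Ioo fun s hs => ?_
    obtain ⟨hs0, _⟩ := hs
    have hzs : 0 < z * s := mul_pos hz hs0
    have A : z ^ (α + 1) * z ^ (-α - 1) = 1 := by
      rw [← Real.rpow_add hz, show α + 1 + (-α - 1) = 0 by ring, Real.rpow_zero]
    have B : s ^ (-α) = s ^ (-α - 1) * s := by
      rw [mul_comm]; exact (rpow_split hs0).symm
    simp only [hg]
    rw [neg_mul, Real.mul_rpow hz.le hs0.le, B]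
    field_simp
    linear_combination (-(Real.exp (-(z * s)) * α - Real.exp (-(z * s)) - α + 1) * δ ^ (α - 1)) * A
  have step2 : ∫ s in Set.Ioo (0:ℝ) δ, (C * z ^ (α + 1)) * g (z * s)
      = (C * z ^ (α + 1)) * ∫ s in (0:ℝ)..δ, g (z * s) := by
    rw [intervalIntegral.integral_of_le hδ.le, ← integral_Ioc_eq_integral_Ioo,
      integral_const_mul]
  have step3 : ∫ s in (0:ℝ)..δ, g (z * s) = z⁻¹ * ∫ r in (0:ℝ)..(z * δ), g r := by
    have := intervalIntegral.integral_comp_mul_left (a := (0:ℝ)) (b := δ) g hz.ne'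
    simpa [smul_eq_mul] using this
  rw [step1, step2, step3]
  have hz1 : z ^ (-α) * z ^ (α + 1) = z := by
    rw [← Real.rpow_add hz, show -α + (α + 1) = 1 by ring, Real.rpow_one]
  calc z ^ (-α) * (C * z ^ (α + 1) * (z⁻¹ * ∫ r in (0:ℝ)..(z * δ), g r))
      = (z ^ (-α) * z ^ (α + 1)) * z⁻¹ * (C * ∫ r in (0:ℝ)..(z * δ), g r) := by ring
    _ = C * ∫ r in (0:ℝ)..(z * δ), g r := by
        rw [hz1, mul_inv_cancel₀ hz.ne', one_mul]
end
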